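/- Let ξ ∈ ℝ⁵ be a nonzero vector with ξ·a(v) ≤ 0 for almost every v ∈ ℝ³, and let g : ℝ³ → ℝ be nonnegative, not almost-everywhere zero, with ν(1+|v|²)g integrable. Then ξ·μ(g) = ∫ ν(v) (ξ·a(v)) g(v) dv < 0, and consequently for any λ ∈ Λ the function s ↦ z(λ + sξ; μ(g)) = ∫ ν exp((λ+sξ)·a) dv − (λ+sξ)·μ(g) tends to +∞ as s → +∞ (provided λ + sξ ∈ Λ for all s > 0). -/

import Mathlib

/-!
The function `v ↦ ξ·a(v) = m (ξ₀ + ξ₁·v + ξ₂|v|²)` is a nonzero polynomial of degree at most two,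
so it vanishes only on a Lebesgue-null set: along a suitable coordinate axis every line meets
its zero set in finitely many points. Hence `ν (ξ·a) g ≤ 0` can vanish almost everywhere only
if `g` does, and `ξ·μ(g) < 0`. Since `∫ ν exp((λ + sξ)·a) ≥ 0`, the dual functional satisfies
`z(λ + sξ; μ(g)) ≥ -λ·μ(g) - s ξ·μ(g)`, which grows linearly in `s`.
-/

open MeasureTheory Real Filter
open scoped Topology

noncomputable section

abbrev V3 : Type := Fin 3 → ℝ

def dot3 (a b : V3) : ℝ := ∑ i, a i * b i

def nsq (v : V3) : ℝ := ∑ i, (v i) ^ 2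

abbrev L5 : Type := ℝ × V3 × ℝ

def dot5 (a b : L5) : ℝ := a.1 * b.1 + dot3 a.2.1 b.2.1 + a.2.2 * b.2.2

def aVec (m : ℝ) (v : V3) : L5 := (m, m • v, m * nsq v)

def expA (m : ℝ) (l : L5) (v : V3) : ℝ := Real.exp (dot5 l (aVec m v))

def momVec (m : ℝ) (ν g : V3 → ℝ) : L5 :=
  (∫ v, ν v * (m * g v), fun i => ∫ v, ν v * (m * v i) * g v,
    ∫ v, ν v * (m * nsq v) * g v)

def zdual (m : ℝ) (ν : V3 → ℝ) (l ρ : L5) : ℝ :=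
  (∫ v, ν v * expA m l v) - dot5 l ρ

def entH (z : ℝ) : ℝ := z * Real.log z - z

def dualCLM (ρ : L5) : L5 →L[ℝ] ℝ :=
  LinearMap.toContinuousLinearMap
    { toFun := fun δ => dot5 δ ρ
      map_add' := by
        intro a b
        simp [dot5, dot3, Prod.fst_add, Prod.snd_add, Pi.add_apply, add_mul,
          Finset.sum_add_distrib]
        ring
      map_smul' := by
        intro c a
        simp only [dot5, dot3, Prod.smul_fst, Prod.smul_snd, Pi.smul_apply,
          smul_eq_mul, Finset.mul_sum, RingHom.id_apply]
        ring_nf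
        rw [Finset.mul_sum]
        ring_nf }

theorem volume_eq_zero_of_forall_insertNth {n : ℕ} (i : Fin (n + 1))
    {s : Set (Fin (n + 1) → ℝ)} (hs : MeasurableSet s)
    (h : ∀ w : Fin n → ℝ, volume {t : ℝ | i.insertNth t w ∈ s} = 0) : volume s = 0 := by
  have e := (volume_preserving_piFinSuccAbove (fun _ : Fin (n + 1) => ℝ) i).symm
  rw [← e.measure_preimage hs.nullMeasurableSet, Measure.volume_eq_prod,
    Measure.prod_apply_symm (e.measurable hs)]
  convert lintegral_zero with w
  exact h w

theorem finite_setOf_quadratic_eq_zero {a b : ℝ} (c : ℝ) (h : a ≠ 0 ∨ b ≠ 0) :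
    {t : ℝ | a * t ^ 2 + b * t + c = 0}.Finite := by
  open Polynomial in
  have hP : C a * X ^ 2 + C b * X + C c ≠ 0 := by
    intro h0
    rcases h with ha | hb
    · exact ha (by simpa [coeff_C] using congrArg (coeff · 2) h0)
    · exact hb (by simpa [coeff_C] using congrArg (coeff · 1) h0)
  simpa [IsRoot] using finite_setOfPred_isRoot hP

theorem nsq_nonneg (v : V3) : 0 ≤ nsq v :=
  Finset.sum_nonneg fun i _ => sq_nonneg (v i)

theorem abs_le_one_add_nsq (v : V3) (i : Fin 3) : |v i| ≤ 1 + nsq v := by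
  have hsq : v i ^ 2 ≤ nsq v :=
    Finset.single_le_sum (fun j _ => sq_nonneg (v j)) (Finset.mem_univ i)
  nlinarith [sq_nonneg (|v i| - 1), sq_abs (v i)]

theorem dot5_add_smul (l ξ ρ : L5) (s : ℝ) :
    dot5 (l + s • ξ) ρ = dot5 l ρ + s * dot5 ξ ρ := by
  simp only [dot5, dot3, Prod.fst_add, Prod.snd_add, Prod.smul_fst, Prod.smul_snd,
    Pi.add_apply, Pi.smul_apply, smul_eq_mul, add_mul, mul_assoc, Finset.sum_add_distrib,
    ← Finset.mul_sum]
  ring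

theorem continuous_dot5_aVec (m : ℝ) (ξ : L5) : Continuous fun v => dot5 ξ (aVec m v) := by
  unfold dot5 dot3 aVec nsq
  fun_prop

theorem dot5_aVec_insertNth (m : ℝ) (ξ : L5) (i : Fin 3) (t : ℝ) (w : Fin 2 → ℝ) :
    dot5 ξ (aVec m (i.insertNth t w)) =
      m * ξ.2.2 * t ^ 2 + m * ξ.2.1 i * t + dot5 ξ (aVec m (i.insertNth 0 w)) := by
  simp only [dot5, dot3, aVec, nsq, Pi.smul_apply, smul_eq_mul, Fin.sum_univ_succAbove _ i,
    Fin.insertNth_apply_same, Fin.insertNth_apply_succAbove]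
  ring

theorem ae_dot5_aVec_ne_zero {m : ℝ} (hm : m ≠ 0) {ξ : L5} (hξ : ξ ≠ 0) :
    ∀ᵐ v, dot5 ξ (aVec m v) ≠ 0 := by
  rw [ae_iff]
  simp only [not_not]
  obtain ⟨c, b, a⟩ := ξ
  by_cases hab : a = 0 ∧ b = 0
  · obtain ⟨rfl, rfl⟩ := hab
    have hc : c ≠ 0 := by rintro rfl; exact hξ rfl
    simp [dot5, dot3, aVec, hc, hm]
  · obtain ⟨i, hi⟩ : ∃ i : Fin 3, m * a ≠ 0 ∨ m * b i ≠ 0 := by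
      by_cases ha : a = 0
      · obtain ⟨i, hbi⟩ := Function.ne_iff.mp fun hb => hab ⟨ha, hb⟩
        exact ⟨i, Or.inr (mul_ne_zero hm hbi)⟩
      · exact ⟨0, Or.inl (mul_ne_zero hm ha)⟩
    refine volume_eq_zero_of_forall_insertNth i
      ((isClosed_eq (continuous_dot5_aVec m _) continuous_const).measurableSet) fun w => ?_
    have hslice := finite_setOf_quadratic_eq_zero (dot5 (c, b, a) (aVec m (i.insertNth 0 w))) hi
    refine measure_mono_null (fun t (ht : dot5 (c, b, a) (aVec m (i.insertNth t w)) = 0) => ?_)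
      (hslice.measure_zero _)
    rwa [dot5_aVec_insertNth] at ht

theorem integral_neg_of_ae_nonpos {α : Type*} [MeasurableSpace α] {μ : Measure α}
    {f : α → ℝ} (hf : f ≤ᵐ[μ] 0) (hfi : Integrable f μ) (hf0 : ¬ f =ᵐ[μ] 0) :
    ∫ x, f x ∂μ < 0 := by
  refine (integral_nonpos_of_ae hf).lt_of_ne fun h0 => hf0 ?_
  have hneg : 0 ≤ᵐ[μ] -f := hf.mono fun x hx => by simpa using hx
  have hzero := (integral_eq_zero_iff_of_nonneg_ae hneg hfi.neg).mp (by simp [integral_neg, h0])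
  filter_upwards [hzero] with x hx
  simpa using hx

section Moments

variable {ν g : V3 → ℝ} (hg : Integrable (fun v => ν v * (1 + nsq v) * g v)) (m : ℝ)
include hg

theorem integrable_moment {w : V3 → ℝ} (hw : Continuous w) {C : ℝ}
    (hwC : ∀ v, |w v| ≤ C * (1 + nsq v)) : Integrable (fun v => ν v * w v * g v) := by
  have hpos : ∀ v, 0 < 1 + nsq v := fun v => by linarith [nsq_nonneg v]
  have hnsq : Continuous nsq := by unfold nsq; fun_prop
  have hbdd : Continuous fun v => w v / (1 + nsq v) :=
    hw.div (continuous_const.add hnsq) fun v => (hpos v).ne'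
  refine (hg.bdd_mul (c := C) hbdd.aestronglyMeasurable (ae_of_all _ fun v => ?_)).congr
    (ae_of_all _ fun v => ?_)
  · rw [Real.norm_eq_abs, abs_div, abs_of_pos (hpos v), div_le_iff₀ (hpos v)]
    exact hwC v
  · field_simp [(hpos v).ne']

theorem integrable_moment_const : Integrable (fun v => ν v * (m * g v)) := by
  simpa only [mul_assoc] using integrable_moment hg (w := fun _ => m) continuous_const
    (C := |m|) fun v => le_mul_of_one_le_right (abs_nonneg m) (by linarith [nsq_nonneg v])

theorem integrable_moment_coord (i : Fin 3) : Integrable (fun v => ν v * (m * v i) * g v) :=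
  integrable_moment hg (by fun_prop) (C := |m|) fun v => by
    rw [abs_mul]; exact mul_le_mul_of_nonneg_left (abs_le_one_add_nsq v i) (abs_nonneg m)

theorem integrable_moment_nsq : Integrable (fun v => ν v * (m * nsq v) * g v) :=
  integrable_moment hg (by unfold nsq; fun_prop) (C := |m|) fun v => by
    rw [abs_mul, abs_of_nonneg (nsq_nonneg v)]
    exact mul_le_mul_of_nonneg_left (by linarith) (abs_nonneg m)

omit hg in
theorem mul_dot5_aVec_mul (ξ : L5) (v : V3) :
    ν v * dot5 ξ (aVec m v) * g v = ξ.1 * (ν v * (m * g v)) +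
      ∑ i, ξ.2.1 i * (ν v * (m * v i) * g v) + ξ.2.2 * (ν v * (m * nsq v) * g v) := by
  simp only [dot5, dot3, aVec, Pi.smul_apply, smul_eq_mul, mul_add, add_mul, Finset.mul_sum,
    Finset.sum_mul]
  ring_nf

theorem integrable_mul_dot5_aVec_mul (ξ : L5) :
    Integrable (fun v => ν v * dot5 ξ (aVec m v) * g v) := by
  simp_rw [mul_dot5_aVec_mul]
  exact (((integrable_moment_const hg m).const_mul _).add
    (integrable_finsetSum _ fun i _ => (integrable_moment_coord hg m i).const_mul _)).add
    ((integrable_moment_nsq hg m).const_mul _)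

theorem dot5_momVec (ξ : L5) :
    dot5 ξ (momVec m ν g) = ∫ v, ν v * dot5 ξ (aVec m v) * g v := by
  have hcoord (i : Fin 3) (_ : i ∈ Finset.univ) :=
    (integrable_moment_coord hg m i).const_mul (ξ.2.1 i)
  have hconst := (integrable_moment_const hg m).const_mul ξ.1
  have hsum := integrable_finsetSum _ hcoord
  simp_rw [mul_dot5_aVec_mul]
  rw [integral_add (f := fun v => _ + _) (hconst.add hsum)
      ((integrable_moment_nsq hg m).const_mul _),
    integral_add hconst hsum, integral_finsetSum _ hcoord]
  simp only [integral_const_mul, dot5, dot3, momVec]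

end Moments

theorem tendsto_zdual_atTop {m : ℝ} {ν : V3 → ℝ} (hν : ∀ v, 0 ≤ ν v) (l : L5) {ξ ρ : L5}
    (hξρ : dot5 ξ ρ < 0) : Tendsto (fun s : ℝ => zdual m ν (l + s • ξ) ρ) atTop atTop := by
  refine tendsto_atTop_mono (fun s => ?_) (tendsto_atTop_add_const_left _ (-dot5 l ρ)
    (tendsto_id.atTop_mul_const (neg_pos.mpr hξρ)))
  have hint : 0 ≤ ∫ v, ν v * expA m (l + s • ξ) v :=
    integral_nonneg fun v => mul_nonneg (hν v) (exp_pos _).le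
  simp only [zdual, dot5_add_smul, id_eq]
  linarith

theorem direction_nonpositive_unbounded_general
    (m : ℝ) (hm : 0 < m)
    (ν : V3 → ℝ) (hνpos : ∀ v, 0 < ν v)
    (ξ : L5) (hξ : ξ ≠ 0)
    (hξa : ∀ᵐ v, dot5 ξ (aVec m v) ≤ 0)
    (g : V3 → ℝ) (hg0 : ∀ v, 0 ≤ g v)
    (hgne : ¬ g =ᵐ[volume] (fun _ => (0 : ℝ)))
    (hgint : Integrable (fun v => ν v * (1 + nsq v) * g v)) :
    dot5 ξ (momVec m ν g) = (∫ v, ν v * dot5 ξ (aVec m v) * g v) ∧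
    (∫ v, ν v * dot5 ξ (aVec m v) * g v) < 0 ∧
    (∀ l : L5, l.2.2 < 0 → (∀ s : ℝ, 0 < s → (l + s • ξ).2.2 < 0) →
      Tendsto (fun s : ℝ => zdual m ν (l + s • ξ) (momVec m ν g)) atTop atTop) := by
  have hmom := dot5_momVec hgint m ξ
  have hnonpos : (fun v => ν v * dot5 ξ (aVec m v) * g v) ≤ᵐ[volume] 0 := by
    filter_upwards [hξa] with v hv
    exact mul_nonpos_of_nonpos_of_nonneg (mul_nonpos_of_nonneg_of_nonpos (hνpos v).le hv) (hg0 v)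
  have hnonzero : ¬ (fun v => ν v * dot5 ξ (aVec m v) * g v) =ᵐ[volume] 0 := fun h0 => hgne <| by
    filter_upwards [h0, ae_dot5_aVec_ne_zero hm.ne' hξ] with v hv hξv
    simpa [(hνpos v).ne', hξv] using hv
  have hneg := integral_neg_of_ae_nonpos hnonpos (integrable_mul_dot5_aVec_mul hgint m ξ) hnonzero
  exact ⟨hmom, hneg, fun l _ _ => tendsto_zdual_atTop (fun v => (hνpos v).le) l (hmom ▸ hneg)⟩

/-- if `ξ ≠ 0` satisfies `ξ·a(v) ≤ 0` a.e. and `g ≥ 0` is not a.e.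
zero with `ν(1+|v|²)g` integrable, then `ξ·μ(g) = ∫ ν (ξ·a) g dv < 0`, and thus
`z(λ+sξ; μ(g)) → +∞` as `s → +∞` whenever the ray `λ + sξ` stays in `Λ`. -/
theorem direction_nonpositive_unbounded
    (m : ℝ) (hm : 0 < m)
    (ν : V3 → ℝ) (hνmeas : Measurable ν) (hνpos : ∀ v, 0 < ν v)
    (hass : ∀ l : L5, Integrable (fun v => ν v * expA m l v) ↔ l.2.2 < 0)
    (ξ : L5) (hξ : ξ ≠ 0)
    (hξa : ∀ᵐ v, dot5 ξ (aVec m v) ≤ 0)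
    (g : V3 → ℝ) (hgmeas : Measurable g) (hg0 : ∀ v, 0 ≤ g v)
    (hgne : ¬ g =ᵐ[volume] (fun _ => (0 : ℝ)))
    (hgint : Integrable (fun v => ν v * (1 + nsq v) * g v)) :
    dot5 ξ (momVec m ν g) = (∫ v, ν v * dot5 ξ (aVec m v) * g v) ∧
    (∫ v, ν v * dot5 ξ (aVec m v) * g v) < 0 ∧
    (∀ l : L5, l.2.2 < 0 → (∀ s : ℝ, 0 < s → (l + s • ξ).2.2 < 0) →
      Tendsto (fun s : ℝ => zdual m ν (l + s • ξ) (momVec m ν g)) atTop atTop) :=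
  direction_nonpositive_unbounded_general m hm ν hνpos ξ hξ hξa g hg0 hgne hgint
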